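/- arXiv:0909.0053 — 2 statements merged into one kernel-verified Lean document; each statement's English description precedes it below -/
import Mathlib

section
/- Let G ∈ 𝔾_π with S ∈ st(G) and let v_k ∈ S̄. Then S ∪ {v_k} ∈ st(G), S ∈ st(R_{S∪{v_k}}(G)), and R_S(G) = R_S(R_{S∪{v_k}}(G)); that is, reducing G over S equals first reducing G over S ∪ {v_k} and then removing the single vertex v_k. -/
open scoped Classical

noncomputable section

/-- A finite weighted digraph with weights in the field `𝕎 = RatFunc ℂ` of complex
rational functions: a finite vertex set together with a weight function, where
weight `0` encodes the absence of an edge (no parallel edges, loops allowed). -/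
structure WDigraph (V : Type*) [Fintype V] [DecidableEq V] where
  verts : Finset V
  w : V → V → RatFunc ℂ

namespace WDigraph

variable {V : Type*} [Fintype V] [DecidableEq V]

/-- Membership in `𝔾`: all edges (nonzero weights) join vertices of `G`. -/
def Wf (G : WDigraph V) : Prop :=
  ∀ u v, G.w u v ≠ 0 → u ∈ G.verts ∧ v ∈ G.verts

/-- `det (M(G) - λ I)` as an element of `𝕎`. -/
def charDet (G : WDigraph V) : RatFunc ℂ :=
  Matrix.det (Matrix.of fun i j : G.verts =>
    G.w i.1 j.1 - if i = j then (RatFunc.X : RatFunc ℂ) else 0)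

/-- The spectrum of `G`: the list (multiset) of complex solutions, with
multiplicity, of `det (M(G,λ) - λ I) = 0`. -/
def spec (G : WDigraph V) : Multiset ℂ := G.charDet.num.roots

/-- Membership in `𝔾_π`: every adjacency matrix entry `p/q` has `π(p/q) = deg p - deg q ≤ 0`. -/
def PiNonpos (G : WDigraph V) : Prop :=
  ∀ u v, (G.w u v).num.degree ≤ (G.w u v).denom.degree

end WDigraph

/-- Two spectra (lists) differ at most by the set `N`: after removing all entries
with values in `N` they agree. -/
def SpecDiffAtMost (s₁ s₂ : Multiset ℂ) (N : Set ℂ) : Prop :=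
  s₁.filter (fun z => z ∉ N) = s₂.filter (fun z => z ∉ N)

variable {V : Type*} [Fintype V] [DecidableEq V]

/-- `S` is a structural set of `G`: `S` is a nonempty subset of the vertices, the
complement of `S` induces no cycles in `ℓ(G)` (i.e. no closed walk through
consecutive-distinct vertices all lying outside `S`), and no loop at a vertex
outside `S` has weight `λ`. -/
def IsStructuralSet (G : WDigraph V) (S : Finset V) : Prop :=
  S.Nonempty ∧ S ⊆ G.verts ∧
    (∀ v, ¬ Relation.TransGen
      (fun a b => a ∈ G.verts ∧ b ∈ G.verts ∧ a ∉ S ∧ b ∉ S ∧ a ≠ b ∧ G.w a b ≠ 0) v v) ∧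
    ∀ v ∈ G.verts, v ∉ S → G.w v v ≠ RatFunc.X

/-- `β` is a branch of `G` from `u` to `v` with respect to `S`: a path or cycle
from `u` to `v` in `G` all of whose interior vertices lie outside `S`. -/
def IsBranch (G : WDigraph V) (S : Finset V) (u v : V) (β : List V) : Prop :=
  u ∈ S ∧ v ∈ S ∧
    ∃ int : List V, β = u :: (int ++ [v]) ∧
      (∀ x ∈ int, x ∈ G.verts ∧ x ∉ S) ∧
      (u :: int).Nodup ∧ v ∉ int ∧
      List.Chain' (fun a b => G.w a b ≠ 0) β

/-- The branch product `𝒫_ω(β)` of a branch `β = v₁, …, v_m`. -/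
def branchProd {V : Type*} (w : V → V → RatFunc ℂ) : List V → RatFunc ℂ
  | [] => 0
  | [_] => 0
  | [a, b] => w a b
  | a :: b :: c :: rest => w a b * branchProd w (b :: c :: rest) / (RatFunc.X - w b b)

/-- The isospectral reduction `R_S(G)`: the graph on vertex set `S` whose weight
from `u` to `v` is the sum of the branch products of all branches from `u` to
`v` with respect to `S`. -/
def WDigraph.reduce (G : WDigraph V) (S : Finset V) : WDigraph V where
  verts := S
  w := fun u v => ∑ᶠ β ∈ {β : List V | IsBranch G S u v β}, branchProd G.w β

/-- The set `N(G;S)`: all `z ∈ ℂ` such that for some vertex `v` of `G` off `S`,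
either `z = ω(e_vv)(z)` or `ω(e_vv)` is undefined at `z`. -/
def NSet (G : WDigraph V) (S : Finset V) : Set ℂ :=
  {z | ∃ v ∈ G.verts, v ∉ S ∧
    ((RatFunc.X - G.w v v).num.eval z = 0 ∨ (G.w v v).denom.eval z = 0)}

/-- Isomorphism of weighted digraphs: a vertex bijection carrying edges to edges
and preserving weights. -/
def WDigraph.Isom {V₁ : Type*} [Fintype V₁] [DecidableEq V₁]
    {V₂ : Type*} [Fintype V₂] [DecidableEq V₂]
    (G : WDigraph V₁) (H : WDigraph V₂) : Prop :=
  ∃ ρ : G.verts ≃ H.verts, ∀ u v : G.verts, H.w (ρ u).1 (ρ v).1 = G.w u.1 v.1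

/-!
Branches of `G` with respect to `S` that avoid `k` are exactly the branches with respect to
`S ∪ {k}` between vertices of `S`; a branch through `k` splits uniquely at `k` into a branch
ending at `k` and one starting at `k`, and conversely two such branches glue to a branch,
because a repeated interior vertex would close a cycle off `S`. As the branch product of the
glued branch is the product of the two divided by `λ - ω(e_kk)`, this gives
`μ_S(e_uv) = μ(e_uv) + μ(e_uk) μ(e_kv) / (λ - ω(e_kk))` with `μ` the weights of
`R_{S ∪ {k}}(G)`. The same cycle argument shows that the only branch from `k` to itself is the
loop, so `μ(e_kk) = ω(e_kk)`, and the right-hand side is then the weight of `R_S(R_{S ∪ {k}}(G))`,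
since the branches of a graph on `S ∪ {k}` from `u` to `v` are at most `u, v` and `u, k, v`.
-/

open Relation Finset

section BranchProd

variable {α : Type*} (w : α → α → RatFunc ℂ)

theorem branchProd_cons_cons (a b : α) {l : List α} (hl : l ≠ []) :
    branchProd w (a :: b :: l) = w a b * branchProd w (b :: l) / (RatFunc.X - w b b) := by
  obtain ⟨c, l, rfl⟩ := List.exists_cons_of_ne_nil hl
  rfl

theorem branchProd_append_cons (k v : α) (l m : List α) (u : α) :
    branchProd w (u :: (l ++ k :: (m ++ [v]))) =
      branchProd w (u :: (l ++ [k])) * branchProd w (k :: (m ++ [v])) / (RatFunc.X - w k k) := by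
  induction l generalizing u with
  | nil => exact branchProd_cons_cons w u k (by simp)
  | cons b l ih =>
    rw [List.cons_append, branchProd_cons_cons w u b (by simp), ih,
      List.cons_append, branchProd_cons_cons w u b (by simp)]
    ring

end BranchProd

/-- The edges of `ℓ(G)` inside `S̄`, as in the definition of a structural set. -/
def OffEdge (G : WDigraph V) (S : Finset V) (a b : V) : Prop :=
  a ∈ G.verts ∧ b ∈ G.verts ∧ a ∉ S ∧ b ∉ S ∧ a ≠ b ∧ G.w a b ≠ 0

section Reduction

variable {G : WDigraph V} {S : Finset V} {u v k : V}

theorem reflTransGen_offEdge_of_isChain {a b : V} {l : List V}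
    (hc : (a :: (l ++ [b])).IsChain fun x y => G.w x y ≠ 0)
    (hl : ∀ x ∈ a :: (l ++ [b]), x ∈ G.verts ∧ x ∉ S) :
    ReflTransGen (OffEdge G S) a b := by
  have hc' : (a :: (l ++ [b])).IsChain (ReflTransGen (OffEdge G S)) := by
    refine hc.imp_of_mem_imp fun x y hx hy hxy => ?_
    by_cases hxy' : x = y
    · exact hxy' ▸ ReflTransGen.refl
    · exact .single ⟨(hl x hx).1, (hl y hy).1, (hl x hx).2, (hl y hy).2, hxy', hxy⟩
  rw [← reflTransGen_eq_self (r := ReflTransGen (OffEdge G S))]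
  exact List.relationReflTransGen_of_exists_isChain_cons _ hc' (by simp)

theorem isBranch_iff {β : List V} :
    IsBranch G S u v β ↔ u ∈ S ∧ v ∈ S ∧ ∃ int : List V, β = u :: (int ++ [v]) ∧
      (∀ x ∈ int, x ∈ G.verts ∧ x ∉ S) ∧ (u :: int).Nodup ∧ v ∉ int ∧
      β.IsChain fun a b => G.w a b ≠ 0 :=
  Iff.rfl

theorem isBranch_pair (hu : u ∈ S) (hv : v ∈ S) (h : G.w u v ≠ 0) : IsBranch G S u v [u, v] :=
  isBranch_iff.2 ⟨hu, hv, [], rfl, by simp, by simp, by simp, by simpa using h⟩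

theorem isBranch_triple (hu : u ∈ S) (hv : v ∈ S) (hk : k ∈ G.verts) (hkS : k ∉ S)
    (huk : G.w u k ≠ 0) (hkv : G.w k v ≠ 0) : IsBranch G S u v [u, k, v] :=
  isBranch_iff.2 ⟨hu, hv, [k], rfl, by simpa using ⟨hk, hkS⟩,
    by simpa using fun h : u = k => hkS (h ▸ hu), by simpa using fun h : v = k => hkS (h ▸ hv),
    by simpa using ⟨huk, hkv⟩⟩

theorem IsBranch.mem_right {β : List V} (h : IsBranch G S u v β) : v ∈ β := by
  obtain ⟨-, -, int, rfl, -⟩ := isBranch_iff.1 h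
  simp

variable (G S u v) in
theorem finite_setOf_isBranch : {β : List V | IsBranch G S u v β}.Finite := by
  refine (List.finite_length_le V (Fintype.card V + 1)).subset ?_
  rintro β ⟨-, -, int, rfl, -, hnd, -, -⟩
  have := hnd.length_le_card
  change (u :: (int ++ [v])).length ≤ _
  simp only [List.length_cons, List.length_append, List.length_nil] at this ⊢
  omega

variable (G S u v) in
def branches : Finset (List V) := (finite_setOf_isBranch G S u v).toFinset

@[simp]
theorem mem_branches {β : List V} : β ∈ branches G S u v ↔ IsBranch G S u v β :=
  Set.Finite.mem_toFinset _

variable (G S u v) in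
theorem reduce_w : (G.reduce S).w u v = ∑ β ∈ branches G S u v, branchProd G.w β :=
  finsum_mem_eq_finite_toFinset_sum _ _

variable (G S) in
@[simp]
theorem reduce_verts : (G.reduce S).verts = S :=
  rfl

theorem reduce_eq_reduce_of_w_eq {H : WDigraph V}
    (h : ∀ u ∈ S, ∀ v ∈ S, (G.reduce S).w u v = (H.reduce S).w u v) :
    G.reduce S = H.reduce S := by
  have hzero : ∀ (K : WDigraph V) u v, ¬ (u ∈ S ∧ v ∈ S) → (K.reduce S).w u v = 0 :=
    fun K u v huv => by
      rw [reduce_w]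
      exact sum_eq_zero fun β hβ => (huv ⟨(mem_branches.1 hβ).1, (mem_branches.1 hβ).2.1⟩).elim
  change WDigraph.mk S _ = WDigraph.mk S _
  congr 1
  funext u v
  by_cases huv : u ∈ S ∧ v ∈ S
  · exact h u huv.1 v huv.2
  · exact (hzero G u v huv).trans (hzero H u v huv).symm

theorem IsStructuralSet.insert (hS : IsStructuralSet G S) (hk : k ∈ G.verts) :
    IsStructuralSet G (insert k S) := by
  obtain ⟨hne, hsub, hacyc, hloop⟩ := hS
  refine ⟨insert_nonempty k S, insert_subset hk hsub, fun x hx => hacyc x ?_,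
    fun x hx hxS => hloop x hx fun h => hxS (mem_insert_of_mem h)⟩
  exact TransGen.mono (fun a b ⟨ha, hb, haS, hbS, hab, hw⟩ =>
    ⟨ha, hb, fun h => haS (mem_insert_of_mem h), fun h => hbS (mem_insert_of_mem h), hab, hw⟩)
    x x hx

theorem isStructuralSet_of_verts_eq_insert {H : WDigraph V} (hH : H.verts = insert k S)
    (hne : S.Nonempty) (hkk : H.w k k ≠ RatFunc.X) : IsStructuralSet H S := by
  have hoff : ∀ x ∈ H.verts, x ∉ S → x = k := fun x hx hxS => by
    simpa [hH, hxS] using hx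
  refine ⟨hne, hH ▸ subset_insert k S, fun x hx => ?_, fun x hx hxS => hoff x hx hxS ▸ hkk⟩
  obtain ⟨a, -, ha, hx, haS, hxS, hax, -⟩ := TransGen.tail'_iff.1 hx
  exact hax ((hoff a ha haS).trans (hoff x hx hxS).symm)

theorem branches_subset_of_verts_eq_insert (hG : G.verts = insert k S) :
    branches G S u v ⊆ {[u, v], [u, k, v]} := by
  intro β hβ
  obtain ⟨-, -, int, rfl, hmem, hnd, -, -⟩ := isBranch_iff.1 (mem_branches.1 hβ)
  have hint : ∀ x ∈ int, x = k := fun x hx => by simpa [hG, (hmem x hx).2] using (hmem x hx).1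
  rcases int with _ | ⟨a, _ | ⟨b, int⟩⟩
  · simp
  · simp [hint a (by simp)]
  · simp_all

theorem reduce_w_of_verts_eq_insert (hG : G.verts = insert k S) (hkS : k ∉ S)
    (hu : u ∈ S) (hv : v ∈ S) :
    (G.reduce S).w u v = G.w u v + G.w u k * G.w k v / (RatFunc.X - G.w k k) := by
  have hk : k ∈ G.verts := hG ▸ mem_insert_self k S
  rw [reduce_w, sum_subset (branches_subset_of_verts_eq_insert hG), sum_pair (by simp)]
  · rfl
  · intro β hβ hβ'
    rw [mem_branches] at hβ'
    simp only [mem_insert, mem_singleton] at hβ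
    rcases hβ with rfl | rfl
    · by_contra h
      exact hβ' (isBranch_pair hu hv h)
    · change G.w u k * G.w k v / _ = 0
      by_contra h
      simp only [div_eq_zero_iff, mul_eq_zero, not_or] at h
      exact hβ' (isBranch_triple hu hv hk hkS h.1.1 h.1.2)

theorem branches_insert_self_subset (hS : ∀ x, ¬ TransGen (OffEdge G S) x x)
    (hk : k ∈ G.verts) (hkS : k ∉ S) : branches G (insert k S) k k ⊆ {[k, k]} := by
  intro β hβ
  obtain ⟨-, -, int, rfl, hmem, -, hkint, hc⟩ := isBranch_iff.1 (mem_branches.1 hβ)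
  rcases int with _ | ⟨c, int⟩
  · simp
  · have hoff : ∀ x ∈ c :: int, x ∈ G.verts ∧ x ∉ S := fun x hx =>
      ⟨(hmem x hx).1, fun h => (hmem x hx).2 (mem_insert_of_mem h)⟩
    have hck : k ≠ c := fun h => hkint (h ▸ List.mem_cons_self)
    obtain ⟨hkc, hc⟩ := List.isChain_cons_cons.1 hc
    have hc₀ := hoff c List.mem_cons_self
    exact (hS k (TransGen.head' ⟨hk, hc₀.1, hkS, hc₀.2, hck, hkc⟩
      (reflTransGen_offEdge_of_isChain hc
        (List.forall_mem_append.2 ⟨hoff, List.forall_mem_singleton.2 ⟨hk, hkS⟩⟩)))).elim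

theorem reduce_insert_w_self (hS : ∀ x, ¬ TransGen (OffEdge G S) x x) (hk : k ∈ G.verts)
    (hkS : k ∉ S) : (G.reduce (insert k S)).w k k = G.w k k := by
  rw [reduce_w, sum_subset (branches_insert_self_subset hS hk hkS), sum_singleton]
  · rfl
  · intro β hβ hβ'
    obtain rfl := mem_singleton.1 hβ
    by_contra h
    exact hβ' (mem_branches.2 (isBranch_pair (mem_insert_self k S) (mem_insert_self k S) h))

theorem IsBranch.exists_eq_append_tail {β : List V} (hβ : IsBranch G S u v β) (hkS : k ∉ S)
    (hkβ : k ∈ β) : ∃ β₁ β₂, IsBranch G (insert k S) u k β₁ ∧ IsBranch G (insert k S) k v β₂ ∧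
      β = β₁ ++ β₂.tail := by
  obtain ⟨hu, hv, int, rfl, hmem, hnd, hvint, hc⟩ := isBranch_iff.1 hβ
  have hkint : k ∈ int := by
    have : k ≠ u ∧ k ≠ v := ⟨fun h => hkS (h ▸ hu), fun h => hkS (h ▸ hv)⟩
    simpa [this] using hkβ
  obtain ⟨int₁, int₂, rfl⟩ := List.append_of_mem hkint
  simp only [List.nodup_cons, List.nodup_append, List.mem_append, List.mem_cons, not_or] at hnd
  refine ⟨u :: (int₁ ++ [k]), k :: (int₂ ++ [v]),
    isBranch_iff.2 ⟨mem_insert_of_mem hu, mem_insert_self k S, int₁, rfl, ?_, ?_, ?_,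
      hc.prefix ⟨int₂ ++ [v], by simp⟩⟩,
    isBranch_iff.2 ⟨mem_insert_self k S, mem_insert_of_mem hv, int₂, rfl, ?_, ?_, ?_,
      hc.suffix ⟨u :: int₁, by simp⟩⟩, by simp⟩
  all_goals grind

theorem disjoint_interiors_of_acyclic (hS : ∀ x, ¬ TransGen (OffEdge G S) x x)
    (hk : k ∈ G.verts) (hkS : k ∉ S) {int₁ int₂ : List V}
    (hc₁ : (u :: (int₁ ++ [k])).IsChain fun a b => G.w a b ≠ 0)
    (hc₂ : (k :: (int₂ ++ [v])).IsChain fun a b => G.w a b ≠ 0)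
    (hoff₁ : ∀ x ∈ int₁, x ∈ G.verts ∧ x ∉ S) (hoff₂ : ∀ x ∈ int₂, x ∈ G.verts ∧ x ∉ S)
    (hk₁ : k ∉ int₁) : int₁.Disjoint int₂ := by
  intro x hx₁ hx₂
  obtain ⟨p₁, s₁, rfl⟩ := List.append_of_mem hx₁
  obtain ⟨p₂, s₂, rfl⟩ := List.append_of_mem hx₂
  have hxk : ReflTransGen (OffEdge G S) x k :=
    reflTransGen_offEdge_of_isChain (hc₁.suffix ⟨u :: p₁, by simp⟩) <|
      List.forall_mem_append.2 ⟨fun y hy => hoff₁ y (List.mem_append_right _ hy),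
        List.forall_mem_singleton.2 ⟨hk, hkS⟩⟩
  have hkx : ReflTransGen (OffEdge G S) k x :=
    reflTransGen_offEdge_of_isChain (hc₂.prefix ⟨s₂ ++ [v], by simp⟩) <|
      List.forall_mem_cons.2 ⟨⟨hk, hkS⟩, List.forall_mem_append.2
        ⟨fun y hy => hoff₂ y (List.mem_append_left _ hy),
          List.forall_mem_singleton.2 (hoff₁ x hx₁)⟩⟩
  have hne : k ≠ x := fun h => hk₁ (h ▸ hx₁)
  exact hS x (((reflTransGen_iff_eq_or_transGen.1 hxk).resolve_left hne).trans_left hkx)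

theorem IsBranch.append_tail (hS : ∀ x, ¬ TransGen (OffEdge G S) x x)
    (hk : k ∈ G.verts) (hkS : k ∉ S) (hu : u ∈ S) (hv : v ∈ S) {β₁ β₂ : List V}
    (h₁ : IsBranch G (insert k S) u k β₁) (h₂ : IsBranch G (insert k S) k v β₂) :
    IsBranch G S u v (β₁ ++ β₂.tail) := by
  obtain ⟨-, -, int₁, rfl, hmem₁, hnd₁, hk₁, hc₁⟩ := isBranch_iff.1 h₁
  obtain ⟨-, -, int₂, rfl, hmem₂, hnd₂, hv₂, hc₂⟩ := isBranch_iff.1 h₂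
  have hoff : ∀ i : List V, (∀ x ∈ i, x ∈ G.verts ∧ x ∉ insert k S) →
      ∀ x ∈ i, x ∈ G.verts ∧ x ∉ S :=
    fun i hi x hx => ⟨(hi x hx).1, fun h => (hi x hx).2 (mem_insert_of_mem h)⟩
  have hdisj := disjoint_interiors_of_acyclic hS hk hkS hc₁ hc₂ (hoff _ hmem₁) (hoff _ hmem₂) hk₁
  refine isBranch_iff.2 ⟨hu, hv, int₁ ++ k :: int₂, by simp, ?_, ?_, ?_, ?_⟩
  · exact List.forall_mem_append.2 ⟨hoff _ hmem₁, List.forall_mem_cons.2 ⟨⟨hk, hkS⟩, hoff _ hmem₂⟩⟩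
  · have := fun x hx => (hmem₂ x hx).2
    simp only [List.nodup_cons, List.nodup_append, List.mem_append, List.mem_cons,
      mem_insert, not_or] at hnd₁ hnd₂ this ⊢
    grind [List.Disjoint]
  · have := fun x hx => (hmem₁ x hx).2
    simp only [List.mem_append, List.mem_cons, mem_insert, not_or] at this ⊢
    grind
  · simpa using hc₁.append_overlap (l₁ := u :: int₁) (l₂ := [k]) hc₂ (by simp)

theorem branches_filter_not_mem (hkS : k ∉ S) (hu : u ∈ S) (hv : v ∈ S) :
    (branches G S u v).filter (k ∉ ·) = branches G (insert k S) u v := by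
  ext β
  simp only [mem_filter, mem_branches, isBranch_iff, mem_insert, not_or]
  constructor
  · rintro ⟨⟨-, -, int, rfl, hmem, hnd, hvint, hc⟩, hkβ⟩
    exact ⟨.inr hu, .inr hv, int, rfl,
      fun x hx => ⟨(hmem x hx).1, fun h => hkβ (by simp [← h, hx]), (hmem x hx).2⟩, hnd, hvint, hc⟩
  · rintro ⟨-, -, int, rfl, hmem, hnd, hvint, hc⟩
    refine ⟨⟨hu, hv, int, rfl, fun x hx => ⟨(hmem x hx).1, (hmem x hx).2.2⟩, hnd, hvint, hc⟩, ?_⟩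
    have : k ≠ u ∧ k ∉ int ∧ k ≠ v :=
      ⟨fun h => hkS (h ▸ hu), fun h => (hmem k h).2.1 rfl, fun h => hkS (h ▸ hv)⟩
    simp [this]

theorem branches_filter_mem (hS : ∀ x, ¬ TransGen (OffEdge G S) x x) (hk : k ∈ G.verts)
    (hkS : k ∉ S) (hu : u ∈ S) (hv : v ∈ S) :
    (branches G S u v).filter (k ∈ ·) =
      (branches G (insert k S) u k ×ˢ branches G (insert k S) k v).image
        fun p => p.1 ++ p.2.tail := by
  ext β
  simp only [mem_filter, mem_branches, mem_image, mem_product, Prod.exists]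
  constructor
  · rintro ⟨hβ, hkβ⟩
    obtain ⟨β₁, β₂, h₁, h₂, rfl⟩ := hβ.exists_eq_append_tail hkS hkβ
    exact ⟨β₁, β₂, ⟨h₁, h₂⟩, rfl⟩
  · rintro ⟨β₁, β₂, ⟨h₁, h₂⟩, rfl⟩
    exact ⟨h₁.append_tail hS hk hkS hu hv h₂, List.mem_append_left _ h₁.mem_right⟩

theorem injOn_append_tail (hkS : k ∉ S) (hv : v ∈ S) :
    Set.InjOn (fun p : List V × List V => p.1 ++ p.2.tail)
      ↑(branches G (insert k S) u k ×ˢ branches G (insert k S) k v) := by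
  rintro ⟨β₁, β₂⟩ hβ ⟨β₁', β₂'⟩ hβ' h
  simp only [coe_product, Set.mem_prod, mem_coe, mem_branches] at hβ hβ'
  obtain ⟨⟨-, -, int₁, rfl, -, -, hk₁, -⟩, ⟨-, -, int₂, rfl, -, hnd₂, -, -⟩⟩ :=
    And.imp isBranch_iff.1 isBranch_iff.1 hβ
  obtain ⟨⟨-, -, int₁', rfl, -, -, -, -⟩, ⟨-, -, int₂', rfl, -, -, -, -⟩⟩ :=
    And.imp isBranch_iff.1 isBranch_iff.1 hβ'
  have hkz : k ∉ int₂ ++ [v] := by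
    simpa [(List.nodup_cons.1 hnd₂).1] using fun h : k = v => hkS (h ▸ hv)
  have := (List.append_cons_inj_of_notMem hk₁ hkz).1 (by simpa using h)
  simp_all

theorem reduce_w_eq_reduce_insert_w (hS : ∀ x, ¬ TransGen (OffEdge G S) x x)
    (hk : k ∈ G.verts) (hkS : k ∉ S) (hu : u ∈ S) (hv : v ∈ S) :
    (G.reduce S).w u v = (G.reduce (insert k S)).w u v +
      (G.reduce (insert k S)).w u k * (G.reduce (insert k S)).w k v / (RatFunc.X - G.w k k) := by
  simp only [reduce_w]
  rw [← sum_filter_add_sum_filter_not _ (k ∈ ·), add_comm, branches_filter_not_mem hkS hu hv,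
    branches_filter_mem hS hk hkS hu hv, sum_image (injOn_append_tail hkS hv), sum_product,
    sum_mul_sum, sum_div]
  refine congrArg _ (sum_congr rfl fun β₁ h₁ => ?_)
  rw [sum_div]
  refine sum_congr rfl fun β₂ h₂ => ?_
  obtain ⟨-, -, int₁, rfl, -⟩ := isBranch_iff.1 (mem_branches.1 h₁)
  obtain ⟨-, -, int₂, rfl, -⟩ := isBranch_iff.1 (mem_branches.1 h₂)
  simpa using branchProd_append_cons G.w k v int₁ int₂ u

end Reduction

theorem reduce_eq_reduce_reduce_insert_general
    (G : WDigraph V)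
    (S : Finset V) (hS : IsStructuralSet G S)
    (k : V) (hk : k ∈ G.verts) (hkS : k ∉ S) :
    IsStructuralSet G (insert k S) ∧
      IsStructuralSet (G.reduce (insert k S)) S ∧
      G.reduce S = (G.reduce (insert k S)).reduce S := by
  have hacyc : ∀ x, ¬ TransGen (OffEdge G S) x x := hS.2.2.1
  have hkk := reduce_insert_w_self hacyc hk hkS
  refine ⟨hS.insert hk,
    isStructuralSet_of_verts_eq_insert (reduce_verts G _) hS.1 (hkk ▸ hS.2.2.2 k hk hkS),
    reduce_eq_reduce_of_w_eq fun u hu v hv => ?_⟩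
  rw [reduce_w_of_verts_eq_insert (reduce_verts G _) hkS hu hv, hkk,
    reduce_w_eq_reduce_insert_w hacyc hk hkS hu hv]

/-- (Equation (5) in the proof of Lemma 4.) For `G ∈ 𝔾_π`, `S ∈ st(G)` and
`v_k ∉ S` a vertex of `G`: `S ∪ {v_k} ∈ st(G)`, `S ∈ st(R_{S∪{v_k}}(G))`, and
`R_S(G) = R_S(R_{S∪{v_k}}(G))`. -/
theorem reduce_eq_reduce_reduce_insert
    (G : WDigraph V) (hG : G.Wf) (hpi : G.PiNonpos)
    (S : Finset V) (hS : IsStructuralSet G S)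
    (k : V) (hk : k ∈ G.verts) (hkS : k ∉ S) :
    IsStructuralSet G (insert k S) ∧
      IsStructuralSet (G.reduce (insert k S)) S ∧
      G.reduce S = (G.reduce (insert k S)).reduce S :=
  reduce_eq_reduce_reduce_insert_general G S hS k hk hkS
end
end

section
/- Let G = (V,E,ω) be a graph in 𝔾_π with S ∈ st(G), V = {v₁,…,v_n}, and S̄ = {v_k,…,v_n} where 2 ≤ k ≤ n. Then for any permutation ρ of {k,…,n}, R_S(G) = R̄(G; v_{ρ(k)},…,v_{ρ(n)}); i.e., the reduction over S can be accomplished by sequentially removing the vertices of S̄ one at a time in any order. -/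
open scoped Classical

noncomputable section

variable {V : Type*} [Fintype V] [DecidableEq V]

/-- `R̄(G; v₁,…,v_i)`: sequential removal of single vertices, where
`R̄(G;v) = R_{V∖{v}}(G)`. -/
def removeSeq (G : WDigraph V) : List V → WDigraph V
  | [] => G
  | v :: rest => removeSeq (G.reduce (G.verts.erase v)) rest


/-!
Removing a single vertex `v ∉ S` replaces each weight `ω(a,b)` by
`ω(a,b) + ω(a,v) ω(v,b) / (λ - ω(v,v))`. Expanding a branch product of `R̄(G;v)` in these
weights yields the same branch in `G` together with all its copies with `v` inserted once:
every other term, as well as the change of the loop weights off `S`, contains a cycle of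
`ℓ(G)` through `v` off `S`, hence vanishes. The branches of `G` through `v` are exactly the
branches avoiding `v` with `v` inserted somewhere, so `R_S(R̄(G;v)) = R_S(G)`, and the vertices
of `S̄` can be removed one at a time in any order.
-/

namespace List

variable {α : Type*} [DecidableEq α] {v : α} {l : List α} {j : ℕ}

theorem idxOf_insertIdx_of_notMem (hv : v ∉ l) (hj : j ≤ l.length) :
    (l.insertIdx j v).idxOf v = j := by
  induction l generalizing j with
  | nil => simp_all
  | cons a l ih =>
    rcases j with _ | j
    · simp
    · rw [mem_cons, not_or] at hv
      rw [insertIdx_succ_cons, idxOf_cons_ne _ (Ne.symm hv.1), ih hv.2 (by simpa using hj)]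

theorem erase_insertIdx_of_notMem (hv : v ∉ l) (hj : j ≤ l.length) :
    (l.insertIdx j v).erase v = l := by
  rw [← eraseIdx_idxOf_eq_erase, idxOf_insertIdx_of_notMem hv hj, eraseIdx_insertIdx_self]

theorem insertIdx_idxOf_erase (hv : v ∈ l) : (l.erase v).insertIdx (l.idxOf v) v = l := by
  have hlt : l.idxOf v < l.length := idxOf_lt_length_iff.mpr hv
  conv_rhs => rw [← insertIdx_eraseIdx_getElem hlt, getElem_idxOf hlt]
  rw [eraseIdx_idxOf_eq_erase]

end List

namespace Finset

variable {α M : Type*} [DecidableEq α] [AddCommMonoid M]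

def nodupLists (T : Finset α) : Finset (List α) :=
  T.powerset.biUnion fun s => s.val.lists.toFinset

theorem mem_nodupLists {T : Finset α} {l : List α} :
    l ∈ T.nodupLists ↔ l.Nodup ∧ ∀ x ∈ l, x ∈ T := by
  simp only [nodupLists, mem_biUnion, mem_powerset, Multiset.mem_toFinset,
    Multiset.mem_lists_iff]
  constructor
  · rintro ⟨s, hsT, hs⟩
    have hl : (l : Multiset α).Nodup := by rw [← Multiset.quot_mk_to_coe, ← hs]; exact s.nodup
    exact ⟨Multiset.coe_nodup.mp hl, fun x hx => hsT (by simp [Finset.mem_def, hs, hx])⟩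
  · rintro ⟨hnd, hT⟩
    exact ⟨l.toFinset, fun x hx => hT x (List.mem_toFinset.mp hx), by simp [hnd.dedup]⟩

theorem nodupLists_empty : (∅ : Finset α).nodupLists = {[]} := by
  ext l
  rw [mem_nodupLists, mem_singleton]
  constructor
  · exact fun h => List.eq_nil_iff_forall_not_mem.mpr fun x hx => notMem_empty x (h.2 x hx)
  · rintro rfl
    simp

theorem sum_nodupLists_insert {v : α} {T : Finset α} (hv : v ∉ T) (f : List α → M) :
    ∑ l ∈ (insert v T).nodupLists, f l
      = ∑ l ∈ T.nodupLists, (f l + ∑ j ∈ range (l.length + 1), f (l.insertIdx j v)) := by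
  rw [sum_add_distrib, sum_sigma', ← sum_filter_not_add_sum_filter _ (v ∈ ·)]
  congr 1
  · refine sum_congr (ext fun l => ?_) fun _ _ => rfl
    simp only [mem_filter, mem_nodupLists, mem_insert]
    exact ⟨fun ⟨⟨hnd, hT⟩, hvl⟩ =>
        ⟨hnd, fun x hx => (hT x hx).resolve_left (by rintro rfl; exact hvl hx)⟩,
      fun ⟨hnd, hT⟩ =>
        ⟨⟨hnd, fun x hx => Or.inr (hT x hx)⟩, fun hvl => hv (hT v hvl)⟩⟩
  · refine sum_nbij' (fun l => ⟨l.erase v, l.idxOf v⟩) (fun p => p.1.insertIdx p.2 v)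
      ?_ ?_ ?_ ?_ ?_
    · intro l hl
      simp only [mem_filter, mem_nodupLists, mem_insert] at hl
      obtain ⟨⟨hnd, hT⟩, hvl⟩ := hl
      simp only [mem_sigma, mem_nodupLists, mem_range, List.length_erase_of_mem hvl]
      refine ⟨⟨hnd.erase v, fun x hx => ?_⟩, ?_⟩
      · obtain ⟨hxv, hxl⟩ := (hnd.mem_erase_iff).mp hx
        exact (hT x hxl).resolve_left hxv
      · have := List.idxOf_lt_length_iff.mpr hvl
        omega
    · rintro ⟨l, j⟩ hp
      simp only [mem_sigma, mem_nodupLists, mem_range] at hp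
      obtain ⟨⟨hnd, hT⟩, hj⟩ := hp
      have hvl : v ∉ l := fun h => hv (hT v h)
      have hperm := List.perm_insertIdx v l (Nat.lt_succ_iff.mp hj)
      simp only [mem_filter, mem_nodupLists, mem_insert, hperm.nodup_iff, hperm.mem_iff,
        List.nodup_cons, List.mem_cons]
      exact ⟨⟨⟨hvl, hnd⟩, fun x hx => hx.imp id (hT x)⟩, Or.inl trivial⟩
    · intro l hl
      exact List.insertIdx_idxOf_erase (mem_filter.mp hl).2
    · rintro ⟨l, j⟩ hp
      simp only [mem_sigma, mem_nodupLists, mem_range] at hp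
      have hvl : v ∉ l := fun h => hv (hp.1.2 v h)
      have hj := Nat.lt_succ_iff.mp hp.2
      simp only [List.erase_insertIdx_of_notMem hvl hj, List.idxOf_insertIdx_of_notMem hvl hj]
    · intro l hl
      simp only [List.insertIdx_idxOf_erase (mem_filter.mp hl).2]

end Finset

theorem branchProd_cons_cons_of_ne_nil {V : Type*} (w : V → V → RatFunc ℂ) (a b : V)
    {l : List V} (hl : l ≠ []) :
    branchProd w (a :: b :: l) = w a b * branchProd w (b :: l) / (RatFunc.X - w b b) := by
  cases l
  · contradiction
  · rfl

theorem isChain_of_branchProd_ne_zero {V : Type*} {w : V → V → RatFunc ℂ} :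
    ∀ {l : List V}, branchProd w l ≠ 0 → l.IsChain (fun a b => w a b ≠ 0)
  | [], _ => List.isChain_nil
  | [a], _ => List.isChain_singleton a
  | [a, b], h => List.isChain_pair.mpr h
  | a :: b :: c :: l, h => by
      rw [branchProd, div_ne_zero_iff, mul_ne_zero_iff] at h
      exact List.isChain_cons_cons.mpr ⟨h.1.1, isChain_of_branchProd_ne_zero h.1.2⟩

namespace WDigraph

variable {G : WDigraph V} {S : Finset V} {u u' v a b c : V}

@[ext]
theorem ext {G H : WDigraph V} (hverts : G.verts = H.verts) (hw : G.w = H.w) : G = H := by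
  cases G
  cases H
  congr

theorem reduce_w_eq_zero (G : WDigraph V) (h : u ∉ S ∨ u' ∉ S) : (G.reduce S).w u u' = 0 := by
  refine finsum_mem_of_eqOn_zero fun β hβ => ?_
  exact absurd hβ fun hβ => h.elim (· hβ.1) (· hβ.2.1)

theorem wf_reduce (G : WDigraph V) (S : Finset V) : (G.reduce S).Wf := by
  intro a b hw
  by_contra h
  exact hw (G.reduce_w_eq_zero (not_and_or.mp h))

/-- The chain condition of `IsBranch` can be dropped, since the branch product of a list that
is not a chain of edges vanishes. -/
theorem reduce_w_eq_sum (G : WDigraph V) (hu : u ∈ S) (hu' : u' ∈ S) :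
    (G.reduce S).w u u'
      = ∑ l ∈ (G.verts \ S).nodupLists, branchProd G.w (u :: (l ++ [u'])) := by
  have hinj : Set.InjOn (fun l : List V => u :: (l ++ [u'])) (G.verts \ S).nodupLists :=
    fun l _ l' _ h => List.append_left_injective _ (List.cons_injective h)
  rw [← Finset.sum_image hinj]
  refine finsum_mem_eq_sum_of_inter_support_eq _ (Set.ext fun β => ?_)
  simp only [Set.mem_inter_iff, Set.mem_ofPred_eq, Function.mem_support, Finset.coe_image,
    Set.mem_image, Finset.mem_coe, Finset.mem_nodupLists, Finset.mem_sdiff]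
  refine and_congr_left fun hβ => ⟨?_, ?_⟩
  · rintro ⟨-, -, l, rfl, hl, hnd, -⟩
    exact ⟨l, ⟨hnd.of_cons, hl⟩, rfl⟩
  · rintro ⟨l, ⟨hnd, hl⟩, rfl⟩
    exact ⟨hu, hu', l, rfl, hl, List.nodup_cons.mpr ⟨fun h => (hl u h).2 hu, hnd⟩,
      fun h => (hl u' h).2 hu', isChain_of_branchProd_ne_zero hβ⟩

theorem reduce_verts_self (hG : G.Wf) : G.reduce G.verts = G := by
  refine WDigraph.ext rfl (funext₂ fun a b => ?_)
  by_cases hab : a ∈ G.verts ∧ b ∈ G.verts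
  · rw [G.reduce_w_eq_sum hab.1 hab.2, Finset.sdiff_self, Finset.nodupLists_empty,
      Finset.sum_singleton]
    rfl
  · rw [G.reduce_w_eq_zero (not_and_or.mp hab)]
    exact (not_imp_comm.mp (hG a b) hab).symm

theorem reduce_erase_w (hv : v ∈ G.verts) (ha : a ∈ G.verts.erase v)
    (hb : b ∈ G.verts.erase v) :
    (G.reduce (G.verts.erase v)).w a b
      = G.w a b + G.w a v * G.w v b / (RatFunc.X - G.w v v) := by
  rw [G.reduce_w_eq_sum ha hb, Finset.sdiff_erase_self hv, ← Finset.insert_empty,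
    Finset.sum_nodupLists_insert (Finset.notMem_empty v), Finset.nodupLists_empty]
  simp [branchProd]

/-- The edges of `ℓ(G)` between vertices off `S`. -/
def AdjOff (G : WDigraph V) (S : Finset V) (a b : V) : Prop :=
  a ∈ G.verts ∧ b ∈ G.verts ∧ a ∉ S ∧ b ∉ S ∧ a ≠ b ∧ G.w a b ≠ 0

def AcyclicOff (G : WDigraph V) (S : Finset V) : Prop :=
  ∀ x, ¬ Relation.TransGen (G.AdjOff S) x x

theorem adjOff_of_w_ne_zero (hG : G.Wf) (ha : a ∉ S) (hb : b ∉ S) (hab : a ≠ b)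
    (hw : G.w a b ≠ 0) : G.AdjOff S a b :=
  ⟨(hG a b hw).1, (hG a b hw).2, ha, hb, hab, hw⟩

theorem notMem_of_transGen_adjOff (h : Relation.TransGen (G.AdjOff S) a b) :
    a ∉ S ∧ b ∉ S := by
  obtain ⟨_, ⟨-, -, haS, -⟩, -⟩ := Relation.TransGen.head'_iff.mp h
  obtain ⟨_, -, ⟨-, -, -, hbS, -⟩⟩ := Relation.TransGen.tail'_iff.mp h
  exact ⟨haS, hbS⟩

namespace AcyclicOff

theorem w_eq_zero_of_transGen (hacyc : G.AcyclicOff S) (hG : G.Wf)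
    (h : Relation.TransGen (G.AdjOff S) a b) : G.w b a = 0 := by
  by_contra hw
  obtain ⟨haS, hbS⟩ := notMem_of_transGen_adjOff h
  by_cases hba : b = a
  · exact hacyc a (hba ▸ h)
  · exact hacyc a (h.tail (adjOff_of_w_ne_zero hG hbS haS hba hw))

theorem w_mul_w_eq_zero (hacyc : G.AcyclicOff S) (hG : G.Wf) (ha : a ∉ S) (hb : b ∉ S)
    (hab : a ≠ b) : G.w a b * G.w b a = 0 := by
  by_cases hw : G.w a b = 0
  · rw [hw, zero_mul]
  · rw [hacyc.w_eq_zero_of_transGen hG (.single (adjOff_of_w_ne_zero hG ha hb hab hw)), mul_zero]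

/-- A path off `S` from a vertex `c` reachable from `v` cannot run back into `v`: the edge
entering `v` would close a cycle. -/
theorem branchProd_insertIdx_eq_zero (hacyc : G.AcyclicOff S) (hG : G.Wf) :
    ∀ {m : List V} {c : V} {j : ℕ}, j ≤ m.length → (c :: m).Nodup →
      (∀ x ∈ m, x ∉ S) → Relation.TransGen (G.AdjOff S) v c →
      branchProd G.w (c :: (m.insertIdx j v ++ [b])) = 0
  | m, c, 0, _, _, _, hvc => by
      rw [List.insertIdx_zero, List.cons_append, branchProd_cons_cons_of_ne_nil _ _ _ (by simp),
        hacyc.w_eq_zero_of_transGen hG hvc, zero_mul, zero_div]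
  | d :: m, c, j + 1, hj, hnd, hm, hvc => by
      rw [List.insertIdx_succ_cons, List.cons_append,
        branchProd_cons_cons_of_ne_nil _ _ _ (by simp)]
      by_cases hcd : G.w c d = 0
      · rw [hcd, zero_mul, zero_div]
      have hcd' : G.AdjOff S c d := adjOff_of_w_ne_zero hG (notMem_of_transGen_adjOff hvc).2
        (hm d (by simp)) (fun h => (List.nodup_cons.mp hnd).1 (by simp [h])) hcd
      rw [branchProd_insertIdx_eq_zero hacyc hG (Nat.le_of_succ_le_succ hj) hnd.of_cons
        (fun x hx => hm x (by simp [hx])) (hvc.tail hcd'), mul_zero, zero_div]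

theorem reduce_erase_w_self (hacyc : G.AcyclicOff S) (hG : G.Wf) (hv : v ∈ G.verts)
    (hvS : v ∉ S) (hc : c ∈ G.verts.erase v) (hcS : c ∉ S) :
    (G.reduce (G.verts.erase v)).w c c = G.w c c := by
  rw [reduce_erase_w hv hc hc, mul_comm,
    hacyc.w_mul_w_eq_zero hG hvS hcS (Finset.ne_of_mem_erase hc).symm, zero_div, add_zero]

theorem branchProd_reduce_erase (hacyc : G.AcyclicOff S) (hG : G.Wf) (hv : v ∈ G.verts)
    (hvS : v ∉ S) (hb : b ∈ G.verts.erase v) :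
    ∀ {l : List V} {a : V}, a ∈ G.verts.erase v → l.Nodup →
      (∀ x ∈ l, x ∈ G.verts.erase v ∧ x ∉ S) →
      branchProd (G.reduce (G.verts.erase v)).w (a :: (l ++ [b]))
        = branchProd G.w (a :: (l ++ [b]))
          + ∑ j ∈ Finset.range (l.length + 1), branchProd G.w (a :: (l.insertIdx j v ++ [b]))
  | [], a, ha, _, _ => by
      simp [branchProd, reduce_erase_w hv ha hb]
  | c :: l, a, ha, hnd, hl => by
      obtain ⟨hc, hcS⟩ := hl c (by simp)
      have hne : l ++ [b] ≠ [] := by simp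
      set I := ∑ j ∈ Finset.range (l.length + 1), branchProd G.w (c :: (l.insertIdx j v ++ [b]))
      have hcycle : G.w v c * I = 0 := by
        by_cases hvc : G.w v c = 0
        · rw [hvc, zero_mul]
        refine mul_eq_zero_of_right _ (Finset.sum_eq_zero fun j hj => ?_)
        exact branchProd_insertIdx_eq_zero hacyc hG (Nat.lt_succ_iff.mp (Finset.mem_range.mp hj))
          hnd (fun x hx => (hl x (by simp [hx])).2)
          (.single (adjOff_of_w_ne_zero hG hvS hcS (Finset.ne_of_mem_erase hc).symm hvc))
      have hsplit : ∑ j ∈ Finset.range ((c :: l).length + 1),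
            branchProd G.w (a :: ((c :: l).insertIdx j v ++ [b]))
          = G.w a c * I / (RatFunc.X - G.w c c)
            + G.w a v * (G.w v c * branchProd G.w (c :: (l ++ [b])) / (RatFunc.X - G.w c c))
              / (RatFunc.X - G.w v v) := by
        rw [Finset.sum_range_succ', Finset.mul_sum, Finset.sum_div]
        simp only [List.length_cons, List.insertIdx_succ_cons, List.insertIdx_zero,
          List.cons_append, branchProd_cons_cons_of_ne_nil _ _ _ (List.cons_ne_nil _ _),
          branchProd_cons_cons_of_ne_nil _ _ _
            (List.append_ne_nil_of_right_ne_nil _ (List.cons_ne_nil b [])), mul_div_assoc]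
      rw [hsplit, List.cons_append, branchProd_cons_cons_of_ne_nil _ _ _ hne,
        branchProd_cons_cons_of_ne_nil _ _ _ hne,
        branchProd_reduce_erase hacyc hG hv hvS hb hc hnd.of_cons
          (fun x hx => hl x (by simp [hx])),
        reduce_erase_w hv ha hc, reduce_erase_w_self hacyc hG hv hvS hc hcS]
      linear_combination
        G.w a v / (RatFunc.X - G.w v v) / (RatFunc.X - G.w c c) * hcycle

theorem reduce_erase (hacyc : G.AcyclicOff S) (hG : G.Wf) (hv : v ∈ G.verts) (hvS : v ∉ S) :
    (G.reduce (G.verts.erase v)).AcyclicOff S := by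
  have hlift : ∀ a b, (G.reduce (G.verts.erase v)).AdjOff S a b →
      Relation.TransGen (G.AdjOff S) a b := by
    rintro a b ⟨ha, hb, haS, hbS, hab, hw⟩
    rw [reduce_erase_w hv ha hb] at hw
    by_cases hab' : G.w a b = 0
    · rw [hab', zero_add, mul_div_assoc] at hw
      obtain ⟨hav, hvb⟩ := mul_ne_zero_iff.mp hw
      exact .tail (.single (adjOff_of_w_ne_zero hG haS hvS (Finset.ne_of_mem_erase ha) hav))
        (adjOff_of_w_ne_zero hG hvS hbS (Finset.ne_of_mem_erase hb).symm
          (div_ne_zero_iff.mp hvb).1)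
    · exact .single (adjOff_of_w_ne_zero hG haS hbS hab hab')
  exact fun x hx => hacyc x (Relation.TransGen.lift' id hlift x x hx)

theorem reduce_reduce_erase (hacyc : G.AcyclicOff S) (hG : G.Wf) (hSV : S ⊆ G.verts)
    (hv : v ∈ G.verts) (hvS : v ∉ S) :
    (G.reduce (G.verts.erase v)).reduce S = G.reduce S := by
  have hSV' : S ⊆ G.verts.erase v := Finset.subset_erase.mpr ⟨hSV, hvS⟩
  refine WDigraph.ext rfl (funext₂ fun u u' => ?_)
  by_cases hu : u ∈ S ∧ u' ∈ S
  swap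
  · rw [reduce_w_eq_zero _ (not_and_or.mp hu), reduce_w_eq_zero _ (not_and_or.mp hu)]
  rw [reduce_w_eq_sum _ hu.1 hu.2, reduce_w_eq_sum _ hu.1 hu.2,
    ← Finset.insert_erase (Finset.mem_sdiff.mpr ⟨hv, hvS⟩),
    Finset.sum_nodupLists_insert (Finset.notMem_erase v _)]
  refine Finset.sum_congr (congrArg _ (Finset.erase_sdiff_comm _ _ _)) fun l hl => ?_
  rw [← Finset.erase_sdiff_comm, Finset.mem_nodupLists] at hl
  exact branchProd_reduce_erase hacyc hG hv hvS (hSV' hu.2) (hSV' hu.1) hl.1 fun x hx =>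
    Finset.mem_sdiff.mp (hl.2 x hx)

end AcyclicOff

theorem reduce_eq_removeSeq_of_acyclicOff :
    ∀ {G : WDigraph V} {l : List V}, G.Wf → S ⊆ G.verts → G.AcyclicOff S → l.Nodup →
      l.toFinset = G.verts \ S → G.reduce S = removeSeq G l
  | G, [], hG, hSV, _, _, hl => by
      rw [removeSeq, Finset.Subset.antisymm hSV (Finset.sdiff_eq_empty_iff_subset.mp
        (by rw [← hl, List.toFinset_nil])), reduce_verts_self hG]
  | G, v :: l, hG, hSV, hacyc, hnd, hl => by
      have hv : v ∈ G.verts \ S := hl ▸ List.mem_toFinset.mpr (List.mem_cons_self ..)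
      rw [Finset.mem_sdiff] at hv
      rw [removeSeq, ← hacyc.reduce_reduce_erase hG hSV hv.1 hv.2]
      refine reduce_eq_removeSeq_of_acyclicOff (G.wf_reduce _)
        (Finset.subset_erase.mpr ⟨hSV, hv.2⟩) (hacyc.reduce_erase hG hv.1 hv.2)
        (List.nodup_cons.mp hnd).2 ?_
      rw [show (G.reduce (G.verts.erase v)).verts = G.verts.erase v from rfl,
        Finset.erase_sdiff_comm, ← hl, List.toFinset_cons,
        Finset.erase_insert fun h => (List.nodup_cons.mp hnd).1 (List.mem_toFinset.mp h)]

end WDigraph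

theorem reduce_eq_removeSeq_general
    (G : WDigraph V) (hG : G.Wf)
    (S : Finset V) (hS : IsStructuralSet G S)
    (l : List V) (hnd : l.Nodup) (hl : l.toFinset = G.verts \ S) :
    G.reduce S = removeSeq G l :=
  WDigraph.reduce_eq_removeSeq_of_acyclicOff hG hS.2.1 hS.2.2.1 hnd hl

/-- **Lemma 4.** Let `G ∈ 𝔾_π` with `S ∈ st(G)`. Then for any enumeration (i.e.
any ordering/permutation) `l` of the vertices of `S̄ = V∖S`, the reduction of `G`
over `S` equals the sequential removal of the vertices of `S̄` one at a time in
that order: `R_S(G) = R̄(G; v_{ρ(k)},…,v_{ρ(n)})`. -/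
theorem reduce_eq_removeSeq
    (G : WDigraph V) (hG : G.Wf) (hpi : G.PiNonpos)
    (S : Finset V) (hS : IsStructuralSet G S)
    (l : List V) (hne : l ≠ []) (hnd : l.Nodup) (hl : l.toFinset = G.verts \ S) :
    G.reduce S = removeSeq G l :=
  reduce_eq_removeSeq_general G hG S hS l hnd hl
end
end
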